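/- Fix a finite list with a designated set of blue positions and let X be a set of non-blue positions. For F ⊆ X define f(F) to be the minimum length of a sequence of adjacent transpositions after which every element of F occurs below every blue element in the resulting list. Then f : P(X) → ℕ is submodular; that is, f(Y) + f(Z) ≥ f(Y ∪ Z) + f(Y ∩ Z) for all Y, Z ⊆ X. -/

import Mathlib

/-- `l'` is obtained from `l` by one adjacent transposition (swap). -/
def AdjSwap {γ : Type*} (l l' : List γ) : Prop :=
  ∃ (p s : List γ) (x y : γ), l = p ++ x :: y :: s ∧ l' = p ++ y :: x :: s

/-- `SwapSeqL k l l'` : `l'` is obtained from `l` by a sequence of `k`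
adjacent transpositions. -/
def SwapSeqL {γ : Type*} : ℕ → List γ → List γ → Prop
  | 0, l, l' => l' = l
  | k + 1, l, l' => ∃ l'', AdjSwap l l'' ∧ SwapSeqL k l'' l'

/-- We represent the original list `(a₁, …, a_d)` by `List.finRange d` with a
designated set `blue` of blue positions.  For a set `F` of positions,
`costF blue F` is the minimum length of a sequence of adjacent transpositions
after which every element of `F` occurs below (after) every blue element. -/
noncomputable def costF {d : ℕ} (blue : Finset (Fin d)) (F : Finset (Fin d)) : ℕ :=
  sInf {k : ℕ | ∃ l' : List (Fin d), SwapSeqL k (List.finRange d) l' ∧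
      ∀ x ∈ F, ∀ b ∈ blue, l'.idxOf b < l'.idxOf x}

/-! For a set `S` containing every blue element (below, a `Bool` predicate), let `crossings S`
count the pairs `(x, s)` with `x ∉ S` occurring before `s ∈ S` in the original list. An adjacent
swap changes this count by at most one, and the stable partition of the list into `S` followed by
its complement realises it, so it is exactly the number of swaps needed to bring `S` to the front.
An optimal list for `F` brings to the front the set of elements not after its last blue one,
which avoids `F`; hence `costF blue F` is the minimum of `crossings S` over `S ⊇ blue` disjoint
from `F`.
But `crossings` is submodular in `S`, and for optimal `S_Y`, `S_Z` the sets `S_Y ∩ S_Z` and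
`S_Y ∪ S_Z` are admissible for `Y ∪ Z` and `Y ∩ Z`. -/

section Crossings

variable {γ : Type*}

theorem AdjSwap.perm {l l' : List γ} (h : AdjSwap l l') : l'.Perm l := by
  obtain ⟨p, s, x, y, rfl, rfl⟩ := h
  exact (List.Perm.swap x y s).append_left p

theorem AdjSwap.cons (a : γ) {l l' : List γ} (h : AdjSwap l l') : AdjSwap (a :: l) (a :: l') := by
  obtain ⟨p, s, x, y, rfl, rfl⟩ := h
  exact ⟨a :: p, s, x, y, rfl, rfl⟩

theorem SwapSeqL.perm : ∀ {k : ℕ} {l l' : List γ}, SwapSeqL k l l' → l'.Perm l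
  | 0, _, _, h => h ▸ List.Perm.refl _
  | _ + 1, _, _, ⟨_, hs, h⟩ => h.perm.trans hs.perm

theorem SwapSeqL.cons (a : γ) : ∀ {k : ℕ} {l l' : List γ}, SwapSeqL k l l' →
    SwapSeqL k (a :: l) (a :: l')
  | 0, _, _, h => h ▸ rfl
  | _ + 1, _, _, ⟨l'', hs, h⟩ => ⟨a :: l'', hs.cons a, h.cons a⟩

theorem SwapSeqL.trans : ∀ {k₁ k₂ : ℕ} {l₁ l₂ l₃ : List γ},
    SwapSeqL k₁ l₁ l₂ → SwapSeqL k₂ l₂ l₃ → SwapSeqL (k₁ + k₂) l₁ l₃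
  | 0, _, _, _, _, h₁, h₂ => by rw [Nat.zero_add, ← h₁]; exact h₂
  | _ + 1, _, _, _, _, ⟨l'', hs, h₁⟩, h₂ => by
    rw [Nat.succ_add]; exact ⟨l'', hs, h₁.trans h₂⟩

theorem swapSeqL_cons_append (a : γ) (s : List γ) :
    ∀ m : List γ, SwapSeqL m.length (a :: (m ++ s)) (m ++ a :: s)
  | [] => rfl
  | c :: m =>
    ⟨c :: a :: (m ++ s), ⟨[], m ++ s, a, c, rfl, rfl⟩, (swapSeqL_cons_append a s m).cons c⟩

def crossings (p : γ → Bool) : List γ → ℕ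
  | [] => 0
  | a :: t => (if p a then 0 else t.countP p) + crossings p t

theorem crossings_append_swap_le (p : γ → Bool) (x y : γ) (s : List γ) :
    ∀ l : List γ, crossings p (l ++ x :: y :: s) ≤ crossings p (l ++ y :: x :: s) + 1
  | [] => by
    simp only [List.nil_append, crossings, List.countP_cons]
    split_ifs <;> omega
  | a :: l => by
    have hcount : (l ++ x :: y :: s).countP p = (l ++ y :: x :: s).countP p :=
      ((List.Perm.swap y x s).append_left l).countP_eq p
    have := crossings_append_swap_le p x y s l
    simp only [List.cons_append, crossings, hcount]
    omega

theorem AdjSwap.crossings_le (p : γ → Bool) {l l' : List γ} (h : AdjSwap l l') :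
    crossings p l ≤ crossings p l' + 1 := by
  obtain ⟨pre, s, x, y, rfl, rfl⟩ := h
  exact crossings_append_swap_le p x y s pre

theorem SwapSeqL.crossings_le (p : γ → Bool) :
    ∀ {k : ℕ} {l l' : List γ}, SwapSeqL k l l' →
    crossings p l ≤ crossings p l' + k
  | 0, _, _, h => h ▸ le_rfl
  | _ + 1, _, _, ⟨_, hs, h⟩ => by
    have := hs.crossings_le p
    have := h.crossings_le p
    omega

theorem crossings_eq_zero_of_pairwise (p : γ → Bool) :
    ∀ {l : List γ}, l.Pairwise (fun a b => p b → p a) → crossings p l = 0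
  | [], _ => rfl
  | a :: t, h => by
    rw [List.pairwise_cons] at h
    rw [crossings, crossings_eq_zero_of_pairwise p h.2, Nat.add_zero]
    split_ifs with ha
    · rfl
    · exact List.countP_eq_zero.2 fun b hb hpb => ha (h.1 b hb hpb)

theorem swapSeqL_filter_append_filter (p : γ → Bool) :
    ∀ l : List γ, SwapSeqL (crossings p l) l (l.filter p ++ l.filter (!p ·))
  | [] => rfl
  | a :: t => by
    by_cases ha : p a
    · rw [crossings, if_pos ha, Nat.zero_add, List.filter_cons_of_pos ha,
        List.filter_cons_of_neg (by simp [ha]), List.cons_append]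
      exact (swapSeqL_filter_append_filter p t).cons a
    · rw [crossings, if_neg ha, List.filter_cons_of_neg ha, List.filter_cons_of_pos (by simp [ha]),
        List.countP_eq_length_filter, Nat.add_comm]
      exact ((swapSeqL_filter_append_filter p t).cons a).trans (swapSeqL_cons_append a _ _)

theorem idxOf_lt_idxOf_filter_append_filter [DecidableEq γ] {p : γ → Bool} {l : List γ}
    {b x : γ} (hb : b ∈ l) (hpb : p b) (hpx : ¬ p x) :
    (l.filter p ++ l.filter (!p ·)).idxOf b < (l.filter p ++ l.filter (!p ·)).idxOf x := by
  have hb' : b ∈ l.filter p := List.mem_filter.2 ⟨hb, hpb⟩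
  have hx' : x ∉ l.filter p := fun hx => hpx (List.mem_filter.1 hx).2
  rw [List.idxOf_append_of_mem hb', List.idxOf_append_of_notMem hx']
  have := List.idxOf_lt_length_iff.2 hb'
  omega

theorem countP_or_add_countP_and (p q : γ → Bool) (l : List γ) :
    l.countP (fun a => p a || q a) + l.countP (fun a => p a && q a) = l.countP p + l.countP q := by
  induction l with
  | nil => rfl
  | cons a t ih => simp only [List.countP_cons]; cases p a <;> cases q a <;> simp <;> omega

theorem crossings_or_add_crossings_and_le (p q : γ → Bool) (l : List γ) :
    crossings (fun a => p a || q a) l + crossings (fun a => p a && q a) l ≤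
      crossings p l + crossings q l := by
  induction l with
  | nil => exact le_rfl
  | cons a t ih =>
    have hp := t.countP_mono_left (p := fun a => p a && q a) (q := p) (by simp_all)
    have hq := t.countP_mono_left (p := fun a => p a && q a) (q := q) (by simp_all)
    have := countP_or_add_countP_and p q t
    simp only [crossings]
    by_cases hpa : p a <;> by_cases hqa : q a <;> simp [hpa, hqa] <;> omega

theorem crossings_eq_zero_of_idxOf_le [DecidableEq γ] {p : γ → Bool} {l : List γ}
    (hl : l.Nodup) (hp : ∀ a b, l.idxOf a ≤ l.idxOf b → p b → p a) : crossings p l = 0 := by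
  refine crossings_eq_zero_of_pairwise p (List.pairwise_iff_getElem.2 fun i j hi hj hij => ?_)
  refine hp _ _ ?_
  rw [hl.idxOf_getElem i hi, hl.idxOf_getElem j hj]
  exact hij.le

theorem SwapSeqL.exists_crossings_le [DecidableEq γ] {k : ℕ} {l l' : List γ} {B F : Finset γ}
    (hl : l.Nodup) (h : SwapSeqL k l l')
    (hsep : ∀ x ∈ F, ∀ b ∈ B, l'.idxOf b < l'.idxOf x) :
    ∃ p : γ → Bool, (∀ b ∈ B, p b) ∧ (∀ x ∈ F, ¬ p x) ∧ crossings p l ≤ k := by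
  refine ⟨fun a => decide (∃ b ∈ B, l'.idxOf a ≤ l'.idxOf b),
    fun b hb => ?_, fun x hx => ?_, ?_⟩
  · simpa using ⟨b, hb, le_rfl⟩
  · simpa using fun b hb => hsep x hx b hb
  · have hzero : crossings (fun a => decide (∃ b ∈ B, l'.idxOf a ≤ l'.idxOf b)) l' = 0 :=
      crossings_eq_zero_of_idxOf_le (h.perm.nodup_iff.2 hl) fun a c hac => by
        simpa using fun b hb hcb => ⟨b, hb, hac.trans hcb⟩
    simpa [hzero] using h.crossings_le (fun a => decide (∃ b ∈ B, l'.idxOf a ≤ l'.idxOf b))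

end Crossings

section Cost

variable {d : ℕ} {blue F : Finset (Fin d)}

theorem crossings_mem_costF_set {p : Fin d → Bool} (hblue : ∀ b ∈ blue, p b)
    (hF : ∀ x ∈ F, ¬ p x) :
    crossings p (List.finRange d) ∈ {k : ℕ | ∃ l' : List (Fin d),
      SwapSeqL k (List.finRange d) l' ∧ ∀ x ∈ F, ∀ b ∈ blue, l'.idxOf b < l'.idxOf x} :=
  ⟨_, swapSeqL_filter_append_filter p _, fun x hx b hb =>
    idxOf_lt_idxOf_filter_append_filter (List.mem_finRange b) (hblue b hb) (hF x hx)⟩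

theorem costF_le_crossings {p : Fin d → Bool} (hblue : ∀ b ∈ blue, p b)
    (hF : ∀ x ∈ F, ¬ p x) :
    costF blue F ≤ crossings p (List.finRange d) :=
  Nat.sInf_le (crossings_mem_costF_set hblue hF)

theorem exists_crossings_le_costF (hF : Disjoint blue F) :
    ∃ p : Fin d → Bool, (∀ b ∈ blue, p b) ∧ (∀ x ∈ F, ¬ p x) ∧
      crossings p (List.finRange d) ≤ costF blue F := by
  have hne : ∀ x ∈ F, ¬ decide (x ∈ blue) := fun x hx => by
    simpa using Finset.disjoint_right.1 hF hx
  obtain ⟨l', h, hsep⟩ :=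
    Nat.sInf_mem ⟨_, crossings_mem_costF_set (fun b hb => decide_eq_true hb) hne⟩
  exact h.exists_crossings_le (List.nodup_finRange d) hsep

end Cost

/-- for a fixed set `blue` of blue positions and a set `X` of
non-blue positions, the function `F ↦ costF blue F` is submodular on `P(X)`. -/
theorem costF_submodular (d : ℕ) (blue X : Finset (Fin d)) (hdisj : Disjoint blue X)
    (Y Z : Finset (Fin d)) (hY : Y ⊆ X) (hZ : Z ⊆ X) :
    costF blue (Y ∪ Z) + costF blue (Y ∩ Z) ≤ costF blue Y + costF blue Z := by
  obtain ⟨p, hpblue, hpY, hp⟩ := exists_crossings_le_costF (hdisj.mono_right hY)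
  obtain ⟨q, hqblue, hqZ, hq⟩ := exists_crossings_le_costF (hdisj.mono_right hZ)
  have hunion : costF blue (Y ∪ Z) ≤ crossings (fun a => p a && q a) (List.finRange d) :=
    costF_le_crossings (fun b hb => by simp [hpblue b hb, hqblue b hb]) fun x hx => by
      rcases Finset.mem_union.1 hx with hx | hx <;> simp [hpY, hqZ, hx]
  have hinter : costF blue (Y ∩ Z) ≤ crossings (fun a => p a || q a) (List.finRange d) :=
    costF_le_crossings (fun b hb => by simp [hpblue b hb]) fun x hx => by
      rw [Finset.mem_inter] at hx
      simp [hpY x hx.1, hqZ x hx.2]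
  have := crossings_or_add_crossings_and_le p q (List.finRange d)
  omega
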